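/- If λ, μ ∈ ℂ satisfy |λ| > 1, |μ| > 1 and λ ≠ μ, then F^{(λ)} ≠ F^{(μ)} as subspaces of ℓ∞(ℤ); moreover for every λ with |λ| > 1, F^{(λ)} ≠ c₀(ℤ) (the closed subspace of ℓ∞(ℤ) of sequences tending to 0 at ±∞). Consequently the weak*-topologies σ(ℓ₁(ℤ), F^{(λ)}) for |λ| > 1 are pairwise distinct and all distinct from σ(ℓ₁(ℤ), c₀(ℤ)). -/

import Mathlib

open scoped ENNReal
open Filter Topology

noncomputable section

/-- `ℓ₁(ℤ)`, the complex Banach space of absolutely summable bilateral sequences. -/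
abbrev ellOne : Type := lp (fun _ : ℤ => ℂ) 1

/-- `ℓ∞(ℤ)`, the complex Banach space of bounded bilateral sequences. -/
abbrev ellInf : Type := lp (fun _ : ℤ => ℂ) ∞

lemma memℓp_zshift (m : ℤ) (x : ellInf) : Memℓp (fun n : ℤ => x (n - m)) ∞ := by
  have hx := memℓp_infty_iff.1 (lp.memℓp x)
  refine memℓp_infty (hx.mono ?_)
  rintro r ⟨n, rfl⟩
  exact ⟨n - m, rfl⟩

/-- translation by `m` on `ℓ∞(ℤ)`: `(zshift m x) n = x (n - m)`.  In particular `zshift 1` is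
the bilateral shift `σ`, with `σ(x)(n) = x (n - 1)`, and `zshift m = σ^m`. -/
def zshift (m : ℤ) (x : ellInf) : ellInf := ⟨fun n => x (n - m), memℓp_zshift m x⟩

/-- `F ⊆ ℓ∞(ℤ)` is a concrete predual of `ℓ₁(ℤ)`: a closed subspace such that the canonical
map `ι_F : ℓ₁(ℤ) → F*`, `⟨ι_F a, x⟩ = ∑_n x(n) a(n)`, is an isomorphism of Banach spaces
(a bounded linear bijection with bounded inverse, not necessarily isometric). -/
def IsConcretePredual (F : Submodule ℂ ellInf) : Prop :=
  IsClosed (F : Set ellInf) ∧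
  ∃ e : ellOne ≃L[ℂ] StrongDual ℂ F,
    ∀ (a : ellOne) (x : F), e a x = ∑' n : ℤ, (x : ellInf) n * a n

/-- The weak* topology `σ(ℓ₁(ℤ), F)` on `ℓ₁(ℤ)` induced by a subspace `F ⊆ ℓ∞(ℤ)`:
the coarsest topology making `a ↦ ∑_n x(n) a(n)` continuous for every `x ∈ F`. -/
def weakStar (F : Submodule ℂ ellInf) : TopologicalSpace ellOne :=
  ⨅ x ∈ F, TopologicalSpace.induced (fun a : ellOne => ∑' n : ℤ, x n * a n) inferInstance

/-- `b(n)` = number of ones in the binary expansion of `n ≥ 0`. -/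
def binOnes (n : ℤ) : ℕ := (Nat.digits 2 n.toNat).sum

/-- the element `x₀`: `x₀(n) = λ^{-b(n)}` for `n ≥ 0` and `x₀(n) = 0` for `n < 0`. -/
def x0Fun (lam : ℂ) : ℤ → ℂ := fun n => if 0 ≤ n then lam⁻¹ ^ binOnes n else 0

lemma x0_mem (lam : ℂ) (h : 1 < ‖lam‖) : Memℓp (x0Fun lam) ∞ := by
  refine memℓp_infty ⟨1, ?_⟩
  rintro r ⟨n, rfl⟩
  simp only [x0Fun]
  split_ifs
  · rw [norm_pow]
    refine pow_le_one₀ (norm_nonneg _) ?_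
    rw [norm_inv]
    exact inv_le_one_of_one_le₀ h.le
  · simp

/-- `x₀` as an element of `ℓ∞(ℤ)`. -/
def x0L (lam : ℂ) (h : 1 < ‖lam‖) : ellInf := ⟨x0Fun lam, x0_mem lam h⟩

/-- `F^{(λ)}`: the closed linear span in `ℓ∞(ℤ)` of the bilateral shifts `σ^m(x₀)`, `m ∈ ℤ`. -/
def Flam (lam : ℂ) (h : 1 < ‖lam‖) : Submodule ℂ ellInf :=
  (Submodule.span ℂ (Set.range fun m : ℤ => zshift m (x0L lam h))).topologicalClosure

/-- `c₀(ℤ)`, the closed subspace of `ℓ∞(ℤ)` of sequences tending to `0` at `±∞`. -/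
def c0Z : Submodule ℂ ellInf where
  carrier := {x : ellInf | Tendsto (fun n : ℤ => x n) cofinite (𝓝 0)}
  add_mem' := by
    intro a b ha hb
    have := ha.add hb
    simpa [lp.coeFn_add, Pi.add_apply] using this
  zero_mem' := by
    simp [lp.coeFn_zero]
  smul_mem' := by
    intro c x hx
    have := hx.const_mul c
    simpa [lp.coeFn_smul, Pi.smul_apply, smul_eq_mul] using this


/-!
A sequence `aₖ` in `ℓ₁(ℤ)` tends to `0` for `σ(ℓ₁, F)` exactly when `⟨y, aₖ⟩ → 0` for every
`y ∈ F`. So `σ(ℓ₁, F) ≠ σ(ℓ₁, G)` as soon as some such sequence for `F` has `⟨x, aₖ⟩ ↛ 0` for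
some `x ∈ G`, and equal subspaces would give equal topologies.

For `F^{(λ)}` take `aₖ = δ_{4ᵏ+2ᵏ} - λ⁻¹ δ_{4ᵏ}`. Since `b(2ᴷ + n) = 1 + b(n)` for `0 ≤ n < 2ᴷ`,
the pairing of `aₖ` with `σ^m x₀^{(λ)}` is eventually `0` when `m ≤ 0`, and it tends to `0` when
`m > 0` because `b(2ᴷ - m) → ∞`. As `‖aₖ‖₁` is bounded, the `y` with `⟨y, aₖ⟩ → 0` form a closed
subspace, which therefore contains `F^{(λ)}`; but `⟨x₀^{(μ)}, aₖ⟩ = μ⁻¹(μ⁻¹ - λ⁻¹) ≠ 0` for large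
`k`. For `c₀(ℤ)` take `aₖ = δ_{2ᵏ}`, against which `x₀^{(λ)}` pairs to `λ⁻¹`.
-/

open scoped NNReal

lemma Nat.digits_sum_add_base_pow_mul {b t n m : ℕ} (hb : 1 < b) (hn : n < b ^ t) :
    (b.digits (n + b ^ t * m)).sum = (b.digits n).sum + (b.digits m).sum := by
  rcases m.eq_zero_or_pos with rfl | hm
  · simp
  have hlen : (b.digits n).length ≤ t := (Nat.digits_length_le_iff hb n).2 hn
  have := Nat.digits_append_zeroes_append_digits (k := t - (b.digits n).length) (n := n) hb hm
  rw [Nat.add_sub_cancel' hlen] at this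
  simp [← this]

lemma Nat.digits_two_sum_two_pow_sub_one (s : ℕ) : (Nat.digits 2 (2 ^ s - 1)).sum = s := by
  induction s with
  | zero => simp
  | succ s ih =>
    have h : 2 ^ (s + 1) - 1 = 1 + 2 ^ 1 * (2 ^ s - 1) := by
      have := Nat.one_le_two_pow (n := s); rw [pow_succ]; omega
    rw [h, Nat.digits_sum_add_base_pow_mul one_lt_two (by norm_num), ih]
    simp [add_comm]

lemma Nat.tendsto_digits_two_sum_two_pow_sub {j : ℕ} (hj : 1 ≤ j) :
    Tendsto (fun K => (Nat.digits 2 (2 ^ K - j)).sum) atTop atTop := by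
  refine tendsto_atTop_mono' _ ?_ (tendsto_sub_atTop_nat j)
  filter_upwards [eventually_ge_atTop j] with K hK
  have hj2 : j ≤ 2 ^ j := (Nat.lt_two_pow_self).le
  have h : 2 ^ K - j = (2 ^ j - j) + 2 ^ j * (2 ^ (K - j) - 1) := by
    have h1 : 2 ^ K = 2 ^ j * 2 ^ (K - j) := by rw [← pow_add, Nat.add_sub_cancel' hK]
    have h2 : 1 ≤ 2 ^ (K - j) := Nat.one_le_two_pow
    rw [h1, Nat.mul_sub_one]
    have : 2 ^ j ≤ 2 ^ j * 2 ^ (K - j) := Nat.le_mul_of_pos_right _ h2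
    omega
  rw [h, Nat.digits_sum_add_base_pow_mul one_lt_two (by omega), Nat.digits_two_sum_two_pow_sub_one]
  omega

lemma summable_mul_ellOne (y : ellInf) (a : ellOne) : Summable fun n => y n * a n := by
  refine Summable.of_norm_bounded (g := fun n => ‖y‖ * ‖a n‖) ?_ fun n => ?_
  · have := (lp.memℓp a).summable (by norm_num)
    simpa using this.mul_left ‖y‖
  · rw [norm_mul]
    gcongr
    exact lp.norm_apply_le_norm ENNReal.top_ne_zero y n

lemma norm_tsum_mul_le (y : ellInf) (a : ellOne) : ‖∑' n, y n * a n‖ ≤ ‖a‖ * ‖y‖ := by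
  have hsum : Summable fun n => ‖a n‖ := by simpa using (lp.memℓp a).summable (by norm_num)
  calc ‖∑' n, y n * a n‖ ≤ ∑' n, ‖y‖ * ‖a n‖ := by
        refine tsum_of_norm_bounded (hsum.mul_left ‖y‖).hasSum fun n => ?_
        rw [norm_mul]
        gcongr
        exact lp.norm_apply_le_norm ENNReal.top_ne_zero y n
    _ = ‖a‖ * ‖y‖ := by
        rw [tsum_mul_left, mul_comm, lp.norm_eq_tsum_rpow (by norm_num) a]
        simp

def pairing : ellOne →L[ℂ] ellInf →L[ℂ] ℂ :=
  LinearMap.mkContinuous₂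
    (LinearMap.mk₂ ℂ (fun a y => ∑' n, y n * a n)
      (fun a b y => by
        simp only [lp.coeFn_add, Pi.add_apply, mul_add]
        exact (summable_mul_ellOne y a).tsum_add (summable_mul_ellOne y b))
      (fun c a y => by
        simp only [lp.coeFn_smul, Pi.smul_apply, smul_eq_mul, mul_left_comm _ c]
        exact tsum_mul_left)
      (fun a y z => by
        simp only [lp.coeFn_add, Pi.add_apply, add_mul]
        exact (summable_mul_ellOne y a).tsum_add (summable_mul_ellOne z a))
      (fun c a y => by
        simp only [lp.coeFn_smul, Pi.smul_apply, smul_eq_mul, mul_assoc]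
        exact tsum_mul_left))
    1 (fun a y => by simpa using norm_tsum_mul_le y a)

lemma pairing_apply (a : ellOne) (y : ellInf) : pairing a y = ∑' n, y n * a n := rfl

lemma pairing_single (i : ℤ) (c : ℂ) (y : ellInf) : pairing (lp.single 1 i c) y = y i * c := by
  rw [pairing_apply, tsum_eq_single i fun n hn => by rw [lp.single_apply_ne _ _ _ hn, mul_zero],
    lp.single_apply_self]

lemma tendsto_weakStar_nhds_zero_iff {ι : Type*} {l : Filter ι} {F : Submodule ℂ ellInf}
    {a : ι → ellOne} :
    Tendsto a l (@nhds _ (weakStar F) 0) ↔ ∀ y ∈ F, Tendsto (fun i => pairing (a i) y) l (𝓝 0) := by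
  unfold weakStar
  simp only [_root_.nhds_iInf, tendsto_iInf, nhds_induced, tendsto_comap_iff]
  refine forall₂_congr fun y _ => ?_
  simp [Function.comp_def, ← pairing_apply]

def pairingNull (a : ℕ → ellOne) : Submodule ℂ ellInf where
  carrier := {y | Tendsto (fun k => pairing (a k) y) atTop (𝓝 0)}
  add_mem' {y z} hy hz := by simpa using hy.add hz
  zero_mem' := by simp
  smul_mem' c y hy := by simpa using hy.const_mul c

lemma isClosed_pairingNull {a : ℕ → ellOne} {C : ℝ≥0} (hC : ∀ k, ‖a k‖ ≤ C) :
    IsClosed (pairingNull a : Set ellInf) := by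
  have hlip : ∀ k, LipschitzWith C (pairing (a k)) := fun k =>
    LipschitzWith.of_dist_le_mul fun y z => by
      rw [dist_eq_norm, dist_eq_norm, ← map_sub]
      exact (norm_tsum_mul_le _ _).trans (by gcongr; exact hC k)
  exact (LipschitzWith.uniformEquicontinuous _ C hlip).equicontinuous.isClosed_setOfPred_tendsto
    (f := fun _ => (0 : ℂ)) continuous_const

lemma weakStar_ne_of_le_pairingNull {F G : Submodule ℂ ellInf} {a : ℕ → ellOne} {x : ellInf}
    (hF : F ≤ pairingNull a) (hxG : x ∈ G) (hx : x ∉ pairingNull a) :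
    weakStar F ≠ weakStar G := by
  intro h
  have ha : Tendsto a atTop (@nhds _ (weakStar F) 0) := tendsto_weakStar_nhds_zero_iff.2 hF
  rw [h] at ha
  exact hx (tendsto_weakStar_nhds_zero_iff.1 ha x hxG)

lemma x0Fun_natCast (lam : ℂ) (n : ℕ) : x0Fun lam n = lam⁻¹ ^ (Nat.digits 2 n).sum := by
  simp [x0Fun, binOnes]

lemma x0Fun_two_pow_add (lam : ℂ) {K : ℕ} {n : ℤ} (h0 : 0 ≤ n) (hn : n < 2 ^ K) :
    x0Fun lam (2 ^ K + n) = lam⁻¹ * x0Fun lam n := by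
  lift n to ℕ using h0
  have h : (2 : ℤ) ^ K + n = ((n + 2 ^ K * 1 : ℕ) : ℤ) := by push_cast; ring
  rw [h, x0Fun_natCast, x0Fun_natCast,
    Nat.digits_sum_add_base_pow_mul one_lt_two (by exact_mod_cast hn)]
  simp [pow_succ, mul_comm]

lemma x0Fun_two_pow (lam : ℂ) (K : ℕ) : x0Fun lam (2 ^ K) = lam⁻¹ := by
  simpa [x0Fun, binOnes] using x0Fun_two_pow_add lam le_rfl (pow_pos two_pos K)

lemma tendsto_x0Fun_two_pow_sub {lam : ℂ} (hl : 1 < ‖lam‖) {j : ℤ} (hj : 0 < j) :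
    Tendsto (fun K : ℕ => x0Fun lam (2 ^ K - j)) atTop (𝓝 0) := by
  lift j to ℕ using hj.le
  have hlam : ‖lam⁻¹‖ < 1 := by rw [norm_inv]; exact inv_lt_one_of_one_lt₀ hl
  refine ((tendsto_pow_atTop_nhds_zero_of_norm_lt_one hlam).comp
    (Nat.tendsto_digits_two_sum_two_pow_sub (j := j) (by omega))).congr' ?_
  filter_upwards [eventually_ge_atTop j] with K hK
  have h : (2 : ℤ) ^ K - j = ((2 ^ K - j : ℕ) : ℤ) := by
    rw [Nat.cast_sub (hK.trans Nat.lt_two_pow_self.le)]; push_cast; rfl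
  simp [h, x0Fun_natCast]

lemma x0L_mem_Flam {lam : ℂ} (hl : 1 < ‖lam‖) : x0L lam hl ∈ Flam lam hl :=
  Submodule.le_topologicalClosure _ (Submodule.subset_span ⟨0, by ext n; simp [zshift]⟩)

def testSeq (lam : ℂ) (k : ℕ) : ellOne :=
  lp.single 1 (2 ^ (2 * k) + 2 ^ k) 1 - lp.single 1 (2 ^ (2 * k)) lam⁻¹

lemma pairing_testSeq (lam : ℂ) (k : ℕ) (y : ellInf) :
    pairing (testSeq lam k) y = y (2 ^ (2 * k) + 2 ^ k) - lam⁻¹ * y (2 ^ (2 * k)) := by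
  simp [testSeq, pairing_single, mul_comm]

lemma norm_testSeq_le (lam : ℂ) (k : ℕ) : ‖testSeq lam k‖ ≤ 1 + ‖lam⁻¹‖ :=
  (norm_sub_le _ _).trans_eq (by rw [lp.norm_single one_pos, lp.norm_single one_pos, norm_one])

lemma pairing_testSeq_zshift_x0L (lam : ℂ) (hl : 1 < ‖lam‖) (m : ℤ) (k : ℕ) :
    pairing (testSeq lam k) (zshift m (x0L lam hl)) =
      x0Fun lam (2 ^ (2 * k) + (2 ^ k - m)) - lam⁻¹ * x0Fun lam (2 ^ (2 * k) - m) := by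
  rw [pairing_testSeq]
  show x0Fun lam (_ - m) - lam⁻¹ * x0Fun lam (_ - m) = _
  rw [add_sub_assoc]

lemma two_pow_add_lt_two_pow_two_mul {k : ℕ} (hk : 1 ≤ k) {n : ℤ} (hn : n < 2 ^ k) :
    2 ^ k + n < (2 : ℤ) ^ (2 * k) := by
  have h2 : (2 : ℤ) ≤ 2 ^ k := le_self_pow₀ one_le_two (by omega)
  rw [two_mul, pow_add]
  nlinarith

lemma eventually_pairing_testSeq_zshift_x0L_eq_zero (lam : ℂ) (hl : 1 < ‖lam‖) {m : ℤ}
    (hm : m ≤ 0) : ∀ᶠ k in atTop, pairing (testSeq lam k) (zshift m (x0L lam hl)) = 0 := by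
  filter_upwards [eventually_ge_atTop 1, eventually_ge_atTop (-m).toNat] with k hk1 hkm
  have hmk : -m < 2 ^ k := (Int.toNat_le.1 hkm).trans_lt (by exact_mod_cast Nat.lt_two_pow_self)
  have hlt := two_pow_add_lt_two_pow_two_mul hk1 hmk
  rw [pairing_testSeq_zshift_x0L, sub_eq_add_neg (2 ^ k), sub_eq_add_neg (2 ^ (2 * k)),
    x0Fun_two_pow_add lam (by omega) hlt, x0Fun_two_pow_add lam (by omega) hmk,
    x0Fun_two_pow_add lam (by omega) (by linarith)]
  ring

lemma tendsto_pairing_testSeq_zshift_x0L_of_pos (lam : ℂ) (hl : 1 < ‖lam‖) {m : ℤ}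
    (hm : 0 < m) :
    Tendsto (fun k => pairing (testSeq lam k) (zshift m (x0L lam hl))) atTop (𝓝 0) := by
  have hP : Tendsto (fun k : ℕ => x0Fun lam (2 ^ (2 * k) + (2 ^ k - m))) atTop (𝓝 0) := by
    have h := (tendsto_x0Fun_two_pow_sub hl hm).const_mul lam⁻¹
    rw [mul_zero] at h
    refine h.congr' ?_
    filter_upwards [eventually_ge_atTop 1, eventually_ge_atTop m.toNat] with k hk1 hkm
    have hmk : m ≤ 2 ^ k := (Int.toNat_le.1 hkm).trans (by exact_mod_cast Nat.lt_two_pow_self.le)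
    exact (x0Fun_two_pow_add lam (by omega) (two_pow_add_lt_two_pow_two_mul hk1 (by omega))).symm
  have hQ : Tendsto (fun k : ℕ => x0Fun lam (2 ^ (2 * k) - m)) atTop (𝓝 0) :=
    (tendsto_x0Fun_two_pow_sub hl hm).comp
      (tendsto_atTop_mono (fun k => Nat.le_mul_of_pos_left k two_pos) tendsto_id)
  simpa [pairing_testSeq_zshift_x0L] using hP.sub (hQ.const_mul lam⁻¹)

lemma Flam_le_pairingNull_testSeq {lam : ℂ} (hl : 1 < ‖lam‖) :
    Flam lam hl ≤ pairingNull (testSeq lam) := by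
  refine Submodule.topologicalClosure_minimal _ ?_
    (isClosed_pairingNull (C := 1 + ‖lam⁻¹‖₊) fun k => by simpa using norm_testSeq_le lam k)
  rw [Submodule.span_le]
  rintro _ ⟨m, rfl⟩
  rcases le_or_gt m 0 with hm | hm
  · exact tendsto_const_nhds.congr'
      ((eventually_pairing_testSeq_zshift_x0L_eq_zero lam hl hm).mono fun _ h => h.symm)
  · exact tendsto_pairing_testSeq_zshift_x0L_of_pos lam hl hm

lemma x0L_notMem_pairingNull_testSeq {lam mu : ℂ} (hm : 1 < ‖mu‖) (hne : lam ≠ mu) :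
    x0L mu hm ∉ pairingNull (testSeq lam) := by
  have hmu : mu ≠ 0 := norm_pos_iff.1 (one_pos.trans hm)
  have hconst : ∀ᶠ k in atTop, pairing (testSeq lam k) (x0L mu hm) = mu⁻¹ * (mu⁻¹ - lam⁻¹) := by
    filter_upwards [eventually_ge_atTop 1] with k hk1
    rw [pairing_testSeq]
    show x0Fun mu _ - lam⁻¹ * x0Fun mu _ = _
    rw [x0Fun_two_pow_add mu (by positivity) (pow_lt_pow_right₀ one_lt_two (by omega)),
      x0Fun_two_pow, x0Fun_two_pow]
    ring
  intro h
  exact mul_ne_zero (inv_ne_zero hmu) (sub_ne_zero.2 (inv_injective.ne hne.symm))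
    (tendsto_const_nhds_iff.1 (h.congr' hconst))

def diracTwoPow (k : ℕ) : ellOne := lp.single 1 (2 ^ k) 1

lemma c0Z_le_pairingNull_diracTwoPow : c0Z ≤ pairingNull diracTwoPow := by
  intro y hy
  have hinj : Function.Injective fun k : ℕ => (2 : ℤ) ^ k :=
    pow_right_injective₀ two_pos (by norm_num)
  have := (hy : Tendsto (fun n : ℤ => y n) cofinite (𝓝 0)).comp
    (Nat.cofinite_eq_atTop ▸ hinj.tendsto_cofinite)
  simpa [pairingNull, diracTwoPow, pairing_single, Function.comp_def] using this

lemma x0L_notMem_pairingNull_diracTwoPow {lam : ℂ} (hl : 1 < ‖lam‖) :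
    x0L lam hl ∉ pairingNull diracTwoPow := by
  have hlam : lam ≠ 0 := norm_pos_iff.1 (one_pos.trans hl)
  have hval : ∀ k, pairing (diracTwoPow k) (x0L lam hl) = lam⁻¹ := fun k => by
    rw [diracTwoPow, pairing_single, mul_one]
    exact x0Fun_two_pow lam k
  intro h
  exact inv_ne_zero hlam (tendsto_const_nhds_iff.1 (h.congr hval))

/-- Statement 8.  The subspaces `F^{(λ)}` (`|λ| > 1`) are pairwise distinct and all distinct
from `c₀(ℤ)`; consequently the induced weak*-topologies on `ℓ₁(ℤ)` are pairwise distinct and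
distinct from the one induced by `c₀(ℤ)`. -/
theorem statement_8 :
    (∀ (lam mu : ℂ) (hl : 1 < ‖lam‖) (hm : 1 < ‖mu‖), lam ≠ mu → Flam lam hl ≠ Flam mu hm) ∧
    (∀ (lam : ℂ) (hl : 1 < ‖lam‖), Flam lam hl ≠ c0Z) ∧
    (∀ (lam mu : ℂ) (hl : 1 < ‖lam‖) (hm : 1 < ‖mu‖), lam ≠ mu →
      weakStar (Flam lam hl) ≠ weakStar (Flam mu hm)) ∧
    (∀ (lam : ℂ) (hl : 1 < ‖lam‖), weakStar (Flam lam hl) ≠ weakStar c0Z) := by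
  have hFlam : ∀ (lam mu : ℂ) (hl : 1 < ‖lam‖) (hm : 1 < ‖mu‖), lam ≠ mu →
      weakStar (Flam lam hl) ≠ weakStar (Flam mu hm) := fun lam mu hl hm hne =>
    weakStar_ne_of_le_pairingNull (Flam_le_pairingNull_testSeq hl) (x0L_mem_Flam hm)
      (x0L_notMem_pairingNull_testSeq hm hne)
  have hc0 : ∀ (lam : ℂ) (hl : 1 < ‖lam‖), weakStar (Flam lam hl) ≠ weakStar c0Z :=
    fun lam hl => (weakStar_ne_of_le_pairingNull c0Z_le_pairingNull_diracTwoPow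
      (x0L_mem_Flam hl) (x0L_notMem_pairingNull_diracTwoPow hl)).symm
  exact ⟨fun lam mu hl hm hne h => hFlam lam mu hl hm hne (congrArg weakStar h),
    fun lam hl h => hc0 lam hl (congrArg weakStar h), hFlam, hc0⟩
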